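/- Let G be a finite connected simple graph and L an ABC-function on G. Then for any profile π with |π| ≥ 2 and any vertex x of G such that x ∈ L(π,x) (where (π,x) denotes π with one occurrence of x appended), the intersection of intervals ⋂_{y ∈ π} I(x,y) equals {x}. -/
import Mathlib


namespace ArxivABC

variable {V : Type*}

/-- The metric interval `I(u,v)` between two vertices `u` and `v`. -/
def interval (G : SimpleGraph V) (u v : V) : Set V :=
  {w | G.dist u w + G.dist w v = G.dist u v}

/-- An ABC-function on `G`: a consensus function (profiles are finite multisets of
vertices, so anonymity (A) is built in) returning nonempty sets of vertices, and satisfying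
betweenness (B) and consistency (C). -/
structure IsABC (G : SimpleGraph V) (L : Multiset V → Set V) : Prop where
  nonempty : ∀ π : Multiset V, (L π).Nonempty
  betweenness : ∀ u v : V, L {u, v} = interval G u v
  consistency : ∀ π ρ : Multiset V, (L π ∩ L ρ).Nonempty → L (π + ρ) = L π ∩ L ρ

/-- The total distance `F_π(v)` of a vertex `v` with respect to a profile `π`. -/
noncomputable def cost (G : SimpleGraph V) (π : Multiset V) (v : V) : ℕ :=
  (π.map (G.dist v)).sum

/-- The median set of a profile. -/
def median (G : SimpleGraph V) (π : Multiset V) : Set V :=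
  {v | ∀ w, cost G π v ≤ cost G π w}

lemma interval_self {G : SimpleGraph V} (hG : G.Connected) (x : V) :
    interval G x x = {x} := by
  ext w
  simp only [interval, Set.mem_setOf_eq, Set.mem_singleton_iff, SimpleGraph.dist_self]
  constructor
  · intro h
    have h1 : G.dist x w = 0 := by omega
    exact (hG.dist_eq_zero_iff.mp h1).symm
  · rintro rfl; simp

lemma left_mem_interval (G : SimpleGraph V) (x y : V) : x ∈ interval G x y := by
  simp [interval]

lemma L_replicate {G : SimpleGraph V} (hG : G.Connected) {L : Multiset V → Set V}
    (hL : IsABC G L) (x : V) : ∀ m : ℕ, 1 ≤ m → L (Multiset.replicate m x) = {x} := by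
  have hxx : L {x, x} = {x} := by rw [hL.betweenness, interval_self hG]
  have h1 : L {x} = {x} := by
    have hne : (L {x} ∩ L {x}).Nonempty := by
      simpa [Set.inter_self] using hL.nonempty {x}
    have := hL.consistency {x} {x} hne
    have hpair : ({x} : Multiset V) + {x} = {x, x} := by
      simp [Multiset.insert_eq_cons, ← Multiset.singleton_add]
    rw [hpair, hxx] at this
    simpa using this.symm
  intro m hm
  induction m with
  | zero => omega
  | succ n ih =>
    rcases Nat.eq_or_lt_of_le hm with h | h
    · simpa [Multiset.replicate_succ, Nat.succ_le_iff, show n = 0 by omega] using h1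
    · have hn : 1 ≤ n := by omega
      have ihn := ih hn
      have hne : (L {x} ∩ L (Multiset.replicate n x)).Nonempty := by
        rw [h1, ihn]; exact ⟨x, rfl, rfl⟩
      have := hL.consistency {x} (Multiset.replicate n x) hne
      rw [h1, ihn] at this
      have heq : ({x} : Multiset V) + Multiset.replicate n x
          = Multiset.replicate (n + 1) x := by
        rw [Multiset.replicate_succ, Multiset.singleton_add]
      rw [heq] at this
      simpa using this

/-- Lemma 2: for an ABC-function `L`, a profile `π` with `|π| ≥ 2`, and a vertex `x`
with `x ∈ L(π, x)`, the intersection of the intervals `I(x,y)` over `y ∈ π` is `{x}`. -/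
theorem stmt_1 [Fintype V] (G : SimpleGraph V) (hG : G.Connected)
    (L : Multiset V → Set V) (hL : IsABC G L)
    (π : Multiset V) (hπ : 2 ≤ Multiset.card π) (x : V) (hx : x ∈ L (x ::ₘ π)) :
    {z : V | ∀ y ∈ π, z ∈ interval G x y} = {x} := by
  -- Step 1: L(π + (card π) copies of x) = the intersection of intervals
  have key : ∀ ρ : Multiset V, ρ ≠ 0 →
      L (ρ + Multiset.replicate (Multiset.card ρ) x)
        = {z : V | ∀ y ∈ ρ, z ∈ interval G x y} := by
    intro ρ
    induction ρ using Multiset.induction_on with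
    | empty => intro h; exact absurd rfl h
    | cons y σ ih =>
      intro _
      by_cases hσ : σ = 0
      · subst hσ
        have : (y ::ₘ (0 : Multiset V)) + Multiset.replicate 1 x = {x, y} := by
          simp [Multiset.insert_eq_cons, ← Multiset.singleton_add]
          rw [add_comm]
        rw [show Multiset.card (y ::ₘ (0 : Multiset V)) = 1 from by simp, this,
          hL.betweenness]
        ext z; simp [interval]
      · have ihσ := ih hσ
        have hxy : L {x, y} = interval G x y := hL.betweenness x y
        have hne : (L (σ + Multiset.replicate (Multiset.card σ) x) ∩ L {x, y}).Nonempty := by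
          rw [ihσ, hxy]
          exact ⟨x, fun y' _ => left_mem_interval G x y', left_mem_interval G x y⟩
        have hcons := hL.consistency _ _ hne
        have heq : (σ + Multiset.replicate (Multiset.card σ) x) + {x, y}
            = (y ::ₘ σ) + Multiset.replicate (Multiset.card (y ::ₘ σ)) x := by
          rw [Multiset.card_cons, Multiset.replicate_succ]
          simp only [Multiset.insert_eq_cons, ← Multiset.singleton_add]
          abel
        rw [heq] at hcons
        rw [hcons, ihσ, hxy]
        ext z; simp; tauto
  have hkey := key π (by rintro rfl; simp at hπ)
  -- Step 2: decompose π + (card π) x as (x ::ₘ π) + (card π - 1) x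
  have hrep : L (Multiset.replicate (Multiset.card π - 1) x) = {x} :=
    L_replicate hG hL x _ (by omega)
  have hne2 : (L (x ::ₘ π) ∩ L (Multiset.replicate (Multiset.card π - 1) x)).Nonempty :=
    ⟨x, hx, by rw [hrep]; rfl⟩
  have hcons2 := hL.consistency _ _ hne2
  have heq2 : (x ::ₘ π) + Multiset.replicate (Multiset.card π - 1) x
      = π + Multiset.replicate (Multiset.card π) x := by
    have h2 : Multiset.card π = (Multiset.card π - 1) + 1 := by omega
    rw [h2, Multiset.replicate_succ, ← Multiset.singleton_add, ← Multiset.singleton_add]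
    abel
  rw [heq2, hkey, hrep] at hcons2
  rw [hcons2]
  exact Set.inter_eq_right.mpr (Set.singleton_subset_iff.mpr hx)

end ArxivABC
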